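/- arXiv:1705.07327 — 3 statements merged into one kernel-verified Lean document; each statement's English description precedes it below -/
import Mathlib

section
/- Let λ ≥ 1 and let G = (V, E, w) be a weighted connected graph with non-negative edge weights. Let τ and τ* be two spanning trees of G. Suppose that for every edge e of τ, every edge e' of τ* that crosses the cut induced by removing e from τ satisfies w(e') ≥ w(e)/λ. Then the total weight of τ is at most λ times the total weight of τ*. -/
/-!
By Hall's theorem it suffices that for any `k` edges `A` of `τ` at least `k` edges of `τ*` cross
the cut of some edge of `A`. A `τ*`-edge crossing none of these cuts joins vertices that are still
connected in `τ - A`, so `τ - A` together with the crossing edges is connected; it therefore has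
at least `|V| - 1 = |τ|` edges, of which only `|τ| - k` lie in `τ - A`. Both trees have `|V| - 1`
edges, so the resulting matching is a bijection `f`, and summing `w(e) ≤ λ w(f e)` gives the claim.
-/

open Finset SimpleGraph

namespace SimpleGraph

variable {V : Type*} {G H T : SimpleGraph V}

theorem IsAcyclic.reachable_deleteEdges_of_forall (hG : G.IsAcyclic) {S : Set (Sym2 V)} {c d : V}
    (hcd : G.Reachable c d) (h : ∀ e ∈ S, (G.deleteEdges {e}).Reachable c d) :
    (G.deleteEdges S).Reachable c d := by
  classical
  obtain ⟨p⟩ := hcd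
  refine ⟨p.toPath.1.toDeleteEdges S fun e he heS => ?_⟩
  obtain ⟨q⟩ := h e heS
  have hq : e ∉ (q.mapLe (deleteEdges_le _)).toPath.1.edges := fun he' => by
    have := (q.mapLe _).edges_bypass_subset_edges he'
    rw [Walk.edges_mapLe_eq_edges] at this
    simpa using q.edges_subset_edgeSet this
  rw [(hG.subsingleton_path c d).elim p.toPath (q.mapLe (deleteEdges_le _)).toPath] at he
  exact hq he

theorem Connected.of_adj_reachable (hH : H.Connected) (h : ∀ u v, H.Adj u v → G.Reachable u v) :
    G.Connected := by
  refine (connected_iff _).2 ⟨fun u v => ?_, hH.nonempty⟩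
  have := hH u v
  rw [reachable_iff_reflTransGen] at this ⊢
  exact this.lift' id fun a b hab => (reachable_iff_reflTransGen a b).1 (h a b hab)

theorem IsTree.ncard_le_ncard_of_connected_deleteEdges_sup [Finite V] (hT : T.IsTree)
    {S N : Set (Sym2 V)} (hS : S ⊆ T.edgeSet)
    (hW : (T.deleteEdges S ⊔ fromEdgeSet N).Connected) : S.ncard ≤ N.ncard := by
  have hW_card := hW.card_vert_le_card_edgeSet_add_one
  have hT_card := (isTree_iff_connected_and_card.1 hT).2
  have hW_sub : (T.deleteEdges S ⊔ fromEdgeSet N).edgeSet ⊆ (T.edgeSet \ S) ∪ N := by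
    rw [edgeSet_sup, edgeSet_deleteEdges, edgeSet_fromEdgeSet]
    exact Set.union_subset_union_right _ Set.sdiff_subset
  rw [Nat.card_coe_set_eq] at hW_card hT_card
  have := (Set.ncard_le_ncard hW_sub).trans (Set.ncard_union_le _ _)
  have := Set.ncard_sdiff hS
  have := Set.ncard_le_ncard hS
  omega

def CrossesCut (T : SimpleGraph V) (e e' : Sym2 V) : Prop :=
  ∃ c d, e' = s(c, d) ∧ ¬(T.deleteEdges {e}).Reachable c d

theorem IsTree.connected_deleteEdges_sup_crossesCut (hT : T.IsTree) (hH : H.Connected)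
    (S : Set (Sym2 V)) :
    (T.deleteEdges S ⊔
      fromEdgeSet {e' ∈ H.edgeSet | ∃ e ∈ S, T.CrossesCut e e'}).Connected := by
  refine hH.of_adj_reachable fun c d hcd => ?_
  by_cases hcut : ∃ e ∈ S, ¬(T.deleteEdges {e}).Reachable c d
  · obtain ⟨e, heS, hncd⟩ := hcut
    exact Adj.reachable (Or.inr ⟨⟨hcd, e, heS, c, d, rfl, hncd⟩, hcd.ne⟩)
  · push Not at hcut
    exact (hT.isAcyclic.reachable_deleteEdges_of_forall (hT.connected c d) hcut).mono le_sup_left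

theorem IsTree.exists_equiv_edgeSet_crossesCut [Finite V] (hT : T.IsTree) (hH : H.IsTree) :
    ∃ f : T.edgeSet ≃ H.edgeSet, ∀ e : T.edgeSet, T.CrossesCut e (f e) := by
  classical
  have := Fintype.ofFinite H.edgeSet
  have hall (A : Finset T.edgeSet) : #A ≤ #{e' : H.edgeSet | ∃ e ∈ A, T.CrossesCut e e'} := by
    set S : Set (Sym2 V) := Subtype.val '' (A : Set T.edgeSet)
    have hN : {e' ∈ H.edgeSet | ∃ e ∈ S, T.CrossesCut e e'} =
        Subtype.val '' (({e' : H.edgeSet | ∃ e ∈ A, T.CrossesCut e e'} : Finset H.edgeSet) :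
          Set H.edgeSet) := by
      ext e'
      simp [S, and_comm]
    have := hT.ncard_le_ncard_of_connected_deleteEdges_sup (by simp [S])
      (hT.connected_deleteEdges_sup_crossesCut hH.connected S)
    rwa [hN, Set.ncard_image_of_injective _ Subtype.val_injective,
      Set.ncard_image_of_injective _ Subtype.val_injective, Set.ncard_coe_finset,
      Set.ncard_coe_finset] at this
  obtain ⟨f, hf_inj, hf⟩ := (Fintype.all_card_le_filter_rel_iff_exists_injective
    fun (e : T.edgeSet) (e' : H.edgeSet) => T.CrossesCut e e').1 hall
  have hcard : Nat.card H.edgeSet ≤ Nat.card T.edgeSet := by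
    have := (isTree_iff_connected_and_card.1 hT).2
    have := (isTree_iff_connected_and_card.1 hH).2
    omega
  exact ⟨.ofBijective f (hf_inj.bijective_of_nat_card_le hcard), hf⟩

end SimpleGraph

theorem stmt0_general {V : Type*} [Fintype V]
    (w : Sym2 V → ℝ) (lam : ℝ) (hlam : 1 ≤ lam)
    (τ τs : SimpleGraph V) [DecidableRel τ.Adj] [DecidableRel τs.Adj]
    (hτ : τ.IsTree) (hτs : τs.IsTree)
    (hcut : ∀ a b : V, τ.Adj a b → ∀ c d : V, τs.Adj c d →
      ¬ (τ.deleteEdges {s(a, b)}).Reachable c d →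
      w s(a, b) / lam ≤ w s(c, d)) :
    ∑ e ∈ τ.edgeFinset, w e ≤ lam * ∑ e ∈ τs.edgeFinset, w e := by
  obtain ⟨f, hf⟩ := hτ.exists_equiv_edgeSet_crossesCut hτs
  have hlam_pos : 0 < lam := by linarith
  have key (e : τ.edgeSet) : w e ≤ lam * w (f e) := by
    obtain ⟨c, d, hfe, hncd⟩ := hf e
    obtain ⟨⟨a, b⟩, hab⟩ := e
    have hcd : τs.Adj c d := by
      have := (f ⟨s(a, b), hab⟩).2
      rwa [hfe] at this
    rw [hfe, ← div_le_iff₀' hlam_pos]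
    exact hcut a b hab c d hcd hncd
  calc ∑ e ∈ τ.edgeFinset, w e = ∑ e : τ.edgeSet, w e :=
        Finset.sum_subtype _ (fun _ => mem_edgeFinset) _
    _ ≤ ∑ e : τ.edgeSet, lam * w (f e) := Finset.sum_le_sum fun e _ => key e
    _ = lam * ∑ e ∈ τs.edgeFinset, w e := by
      rw [← Finset.mul_sum, f.sum_comp (fun e => w e),
        Finset.sum_subtype _ (fun _ => mem_edgeFinset)]

/-- If every edge of the spanning tree τ* crossing the cut induced by
removing an edge e from the spanning tree τ has weight at least w(e)/λ, then
w(τ) ≤ λ · w(τ*). -/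
theorem stmt0 {V : Type*} [Fintype V] [DecidableEq V]
    (G : SimpleGraph V) (w : Sym2 V → ℝ) (lam : ℝ) (hlam : 1 ≤ lam)
    (hw : ∀ e, 0 ≤ w e) (hG : G.Connected)
    (τ τs : SimpleGraph V) [DecidableRel τ.Adj] [DecidableRel τs.Adj]
    (hτG : τ ≤ G) (hτsG : τs ≤ G)
    (hτ : τ.IsTree) (hτs : τs.IsTree)
    (hcut : ∀ a b : V, τ.Adj a b → ∀ c d : V, τs.Adj c d →
      ¬ (τ.deleteEdges {s(a, b)}).Reachable c d →
      w s(a, b) / lam ≤ w s(c, d)) :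
    ∑ e ∈ τ.edgeFinset, w e ≤ lam * ∑ e ∈ τs.edgeFinset, w e :=
  stmt0_general w lam hlam τ τs hτ hτs hcut
end

section
/- Consider a hierarchical block partition of the index set {0, ..., |R|−1} on an HST T of height h, where n(ℓ) denotes the number of blocks at level ℓ, and where consecutive requests in different level-ℓ blocks but in the same level-(ℓ+1) block are at HST distance exactly δ(ℓ+1). Then the total Arrow cost, defined as the sum over i of d_T(v_{i−1}, v_i), equals Σ_{ℓ=0}^{h−1} (n(ℓ) − n(ℓ+1)) · δ(ℓ+1). -/
/-!
Call `i` a level-`ℓ` cut if `i` and `i + 1` lie in different level-`ℓ` blocks. Since blocks are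
intervals, `n ℓ` is one more than the number of level-`ℓ` cuts, and by refinement the cut
levels of a fixed `i` form an initial segment `0, …, ℓ`, so `d(v i, v (i + 1)) = δ (ℓ + 1)`
telescopes as `∑ ℓ, ([i is an ℓ-cut] - [i is an (ℓ+1)-cut]) * δ (ℓ + 1)`. Summing over `i` and
exchanging the sums gives the claim.
-/

open Finset

theorem eq_sum_range_of_antitone {R : Type*} [Ring R] {P : ℕ → Prop} [DecidablePred P]
    (hP : Antitone P) (g : ℕ → R) {d : R} (h0 : ¬ P 0 → d = 0) :
    ∀ {h : ℕ}, ¬ P h → (∀ ℓ < h, P ℓ → ¬ P (ℓ + 1) → d = g ℓ) →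
      d = ∑ ℓ ∈ range h, ((if P ℓ then 1 else 0) - (if P (ℓ + 1) then 1 else 0)) * g ℓ
  | 0, hh, _ => by simp [h0 hh]
  | h + 1, hh, hg => by
    rw [sum_range_succ, if_neg hh]
    by_cases hPh : P h
    · have below (ℓ : ℕ) (hℓ : ℓ ∈ range h) : P ℓ ∧ P (ℓ + 1) := by
        have := mem_range.mp hℓ
        exact ⟨hP (by omega) hPh, hP (by omega) hPh⟩
      rw [sum_eq_zero fun ℓ hℓ => by simp [below ℓ hℓ], if_pos hPh, hg h (by omega) hPh hh]
      simp
    · rw [eq_sum_range_of_antitone hP g h0 hPh fun ℓ hℓ => hg ℓ (by omega), if_neg hPh]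
      simp

theorem card_image_range_eq_card_filter_ne_add_one {α : Type*} [DecidableEq α] {b : ℕ → α}
    (hb : ∀ i j m, i ≤ j → j ≤ m → b i = b m → b i = b j) :
    ∀ k, #((range (k + 1)).image b) = #{i ∈ range k | b i ≠ b (i + 1)} + 1
  | 0 => by simp
  | k + 1 => by
    have ih := card_image_range_eq_card_filter_ne_add_one hb k
    rw [range_add_one (n := k + 1), image_insert]
    conv_rhs => rw [range_add_one, filter_insert]
    by_cases hk : b k = b (k + 1)
    · rw [if_neg (not_not.mpr hk), card_insert_of_mem (mem_image.mpr ⟨k, by simp, hk⟩), ih]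
    · have fresh : b (k + 1) ∉ (range (k + 1)).image b := by
        simp only [mem_image, mem_range, not_exists, not_and]
        intro j hj hjk
        exact hk (hjk ▸ (hb j k (k + 1) (by omega) (by omega) hjk).symm)
      rw [if_pos hk, card_insert_of_notMem fresh, card_insert_of_notMem (by simp), ih]

theorem stmt10_general {V : Type*} [MetricSpace V] (h k : ℕ) (hk : 0 < k)
    (v : ℕ → V) (δ : ℕ → ℝ)
    (B : ℕ → ℕ → ℕ) (n : ℕ → ℕ)
    (hrefine : ∀ ℓ i j, B ℓ i = B ℓ j → B (ℓ + 1) i = B (ℓ + 1) j)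
    (hconvex : ∀ ℓ i j m, i ≤ j → j ≤ m → B ℓ i = B ℓ m → B ℓ i = B ℓ j)
    (hn : ∀ ℓ, ℓ ≤ h → n ℓ = ((Finset.range k).image (B ℓ)).card)
    (htop : ∀ i j, i < k → j < k → B h i = B h j)
    (hd0 : ∀ i, i + 1 < k → B 0 i = B 0 (i + 1) → dist (v i) (v (i + 1)) = 0)
    (hdist : ∀ ℓ i, ℓ < h → i + 1 < k → B ℓ i ≠ B ℓ (i + 1) →
      B (ℓ + 1) i = B (ℓ + 1) (i + 1) → dist (v i) (v (i + 1)) = δ (ℓ + 1)) :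
    ∑ i ∈ Finset.range (k - 1), dist (v i) (v (i + 1)) =
      ∑ ℓ ∈ Finset.range h, ((n ℓ : ℝ) - (n (ℓ + 1) : ℝ)) * δ (ℓ + 1) := by
  let cut (ℓ i : ℕ) : ℝ := if B ℓ i ≠ B ℓ (i + 1) then 1 else 0
  obtain ⟨m, rfl⟩ : ∃ m, k = m + 1 := ⟨k - 1, by omega⟩
  have dist_eq (i : ℕ) (hi : i ∈ range m) :
      dist (v i) (v (i + 1)) = ∑ ℓ ∈ range h, (cut ℓ i - cut (ℓ + 1) i) * δ (ℓ + 1) := by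
    have hi := mem_range.mp hi
    have cut_antitone : Antitone fun ℓ => B ℓ i ≠ B ℓ (i + 1) :=
      antitone_nat_of_succ_le fun ℓ hcut hsame => hcut (hrefine ℓ i (i + 1) hsame)
    exact eq_sum_range_of_antitone cut_antitone _ (fun h0 => hd0 i (by omega) (not_not.mp h0))
      (not_not.mpr (htop i (i + 1) (by omega) (by omega)))
      fun ℓ hℓ hcut hsame => hdist ℓ i hℓ (by omega) hcut (not_not.mp hsame)
  have blocks_eq (ℓ : ℕ) (hℓ : ℓ ≤ h) : (n ℓ : ℝ) = ∑ i ∈ range m, cut ℓ i + 1 := by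
    rw [hn ℓ hℓ, card_image_range_eq_card_filter_ne_add_one (hconvex ℓ), sum_boole]
    push_cast
    rfl
  calc ∑ i ∈ range (m + 1 - 1), dist (v i) (v (i + 1))
      = ∑ ℓ ∈ range h, ∑ i ∈ range m, (cut ℓ i - cut (ℓ + 1) i) * δ (ℓ + 1) := by
        rw [Nat.add_sub_cancel, sum_congr rfl dist_eq, sum_comm]
    _ = ∑ ℓ ∈ range h, ((n ℓ : ℝ) - n (ℓ + 1)) * δ (ℓ + 1) := by
        refine sum_congr rfl fun ℓ hℓ => ?_
        have hℓ := mem_range.mp hℓ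
        rw [← sum_mul, sum_sub_distrib, blocks_eq ℓ (by omega), blocks_eq (ℓ + 1) (by omega)]
        ring

/-- Given a hierarchical block partition of the request indices
{0,...,k−1} on a 2-HST of height h (B ℓ i is the level-ℓ block of index i;
the level-ℓ partition refines the level-(ℓ+1) partition, blocks are convex sets
of consecutive indices, n ℓ is the number of level-ℓ blocks, all indices lie in
one level-h block), where consecutive requests in different level-ℓ blocks but
the same level-(ℓ+1) block are at distance exactly δ(ℓ+1) and consecutive
requests in the same level-0 block are at distance 0, the total Arrow cost
Σ_i d(v_{i},v_{i+1}) equals Σ_{ℓ=0}^{h−1} (n(ℓ) − n(ℓ+1))·δ(ℓ+1). -/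
theorem stmt10 {V : Type*} [MetricSpace V] (h k : ℕ) (hk : 0 < k)
    (v : ℕ → V) (δ : ℕ → ℝ) (hδ : ∀ ℓ, δ ℓ = 2 ^ (ℓ + 1) - 2)
    (B : ℕ → ℕ → ℕ) (n : ℕ → ℕ)
    (hrefine : ∀ ℓ i j, B ℓ i = B ℓ j → B (ℓ + 1) i = B (ℓ + 1) j)
    (hconvex : ∀ ℓ i j m, i ≤ j → j ≤ m → B ℓ i = B ℓ m → B ℓ i = B ℓ j)
    (hn : ∀ ℓ, ℓ ≤ h → n ℓ = ((Finset.range k).image (B ℓ)).card)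
    (htop : ∀ i j, i < k → j < k → B h i = B h j)
    (hd0 : ∀ i, i + 1 < k → B 0 i = B 0 (i + 1) → dist (v i) (v (i + 1)) = 0)
    (hdist : ∀ ℓ i, ℓ < h → i + 1 < k → B ℓ i ≠ B ℓ (i + 1) →
      B (ℓ + 1) i = B (ℓ + 1) (i + 1) → dist (v i) (v (i + 1)) = δ (ℓ + 1)) :
    ∑ i ∈ Finset.range (k - 1), dist (v i) (v (i + 1)) =
      ∑ ℓ ∈ Finset.range h, ((n ℓ : ℝ) - (n (ℓ + 1) : ℝ)) * δ (ℓ + 1) :=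
  stmt10_general h k hk v δ B n hrefine hconvex hn htop hd0 hdist
end

section
/- Let π be an ordering of requests located at leaves of an HST T and let S be the local-successor spanning tree built from π (each i joined to next(i), the earliest later request at minimum HST distance). Then for every subtree T' of T, the subgraph of S induced by the requests at leaves of T' is connected. -/
/-! The last request `m` of the subtree lies inside it, so for every earlier request `i` of the
subtree the nearest later request `nxt i` is at least as close to `i` as `m` is; in an HST this
keeps `nxt i` inside the subtree. Following successors from any request of the subtree therefore
stays in the subtree and ends at `m`. -/

theorem SimpleGraph.induce_connected_of_exists_adj_gt {α : Type*} [Preorder α] [WellFoundedGT α]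
    (G : SimpleGraph α) {S : Set α} {m : α} (hm : m ∈ S)
    (hstep : ∀ i ∈ S, i ≠ m → ∃ j ∈ S, i < j ∧ G.Adj i j) : (G.induce S).Connected := by
  have reach : ∀ i (hi : i ∈ S), (G.induce S).Reachable ⟨i, hi⟩ ⟨m, hm⟩ := by
    intro i
    induction i using WellFoundedGT.induction with
    | _ i ih =>
      intro hi
      by_cases him : i = m
      · subst him; rfl
      obtain ⟨j, hj, hij, hadj⟩ := hstep i hi him
      exact (SimpleGraph.induce_adj.mpr hadj).reachable.trans (ih j hij hj)
  have : Nonempty S := ⟨⟨m, hm⟩⟩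
  exact ⟨fun a b => (reach a.1 a.2).trans (reach b.1 b.2).symm⟩

theorem strictMono_two_pow_succ_sub_two : StrictMono fun ℓ : ℕ => (2 : ℝ) ^ (ℓ + 1) - 2 :=
  fun _ _ hab => sub_lt_sub_right (pow_lt_pow_right₀ one_lt_two (Nat.succ_lt_succ hab)) 2

theorem ultrametric_mem_ball_of_closer_than_mem_ball {L : Type*} {d : L → L → ℕ}
    (hsymm : ∀ u w, d u w = d w u)
    (hultra : ∀ u w z, d u z ≤ max (d u w) (d w z)) {x y z w : L} {ℓ : ℕ}
    (hx : d x z ≤ ℓ) (hy : d y z ≤ ℓ) (hw : d x w ≤ d x y) : d w z ≤ ℓ := by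
  have hxy : d x y ≤ ℓ := (hultra x z y).trans (max_le hx (hsymm z y ▸ hy))
  exact (hultra w x z).trans (max_le (hsymm w x ▸ hw.trans hxy) hx)

theorem stmt16_general {L : Type*} (lca : L → L → ℕ) (δ : ℕ → ℝ)
    (hδ : ∀ ℓ, δ ℓ = 2 ^ (ℓ + 1) - 2)
    (hsymm : ∀ u w, lca u w = lca w u)
    (hultra : ∀ u w z, lca u z ≤ max (lca u w) (lca w z))
    (k : ℕ) (v : Fin (k + 1) → L) (nxt : Fin (k + 1) → Fin (k + 1))
    (h1 : ∀ i : Fin (k + 1), i.val < k → i < nxt i)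
    (h2 : ∀ i j : Fin (k + 1), i.val < k → i < j →
      δ (lca (v i) (v (nxt i))) ≤ δ (lca (v i) (v j)))
    (u₀ : L) (ℓ : ℕ) (S : Set (Fin (k + 1)))
    (hS : S = {i | lca (v i) u₀ ≤ ℓ}) (hne : S.Nonempty) :
    ((SimpleGraph.fromEdgeSet
      {e : Sym2 (Fin (k + 1)) | ∃ i : Fin (k + 1), i.val < k ∧ e = s(i, nxt i)}).induce
        S).Connected := by
  have hδmono : StrictMono δ := funext hδ ▸ strictMono_two_pow_succ_sub_two
  obtain ⟨m, hm, hmax⟩ := S.exists_max_image id S.toFinite hne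
  refine SimpleGraph.induce_connected_of_exists_adj_gt _ hm fun i hi him => ?_
  have him : i < m := lt_of_le_of_ne (hmax i hi) him
  have hik : i.val < k := by have := m.isLt; omega
  refine ⟨nxt i, ?_, h1 i hik, (SimpleGraph.fromEdgeSet_adj _).mpr ⟨⟨i, hik, rfl⟩, (h1 i hik).ne⟩⟩
  subst hS
  exact ultrametric_mem_ball_of_closer_than_mem_ball hsymm hultra hi hm (hδmono.le_iff_le.mp (h2 i m hik him))

/-- On an HST (leaf set with symmetric ultrametric LCA-level
function, distances δ(lca) with δ(ℓ) = 2^{ℓ+1} − 2), the local-successor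
spanning tree built from an ordering (each position i joined to nxt i, the
earliest later position at minimum HST distance) induces a connected subgraph
on the set of requests lying in any fixed level-ℓ subtree (the set of leaves at
LCA-level ≤ ℓ from a reference leaf u₀). -/
theorem stmt16 {L : Type*} (lca : L → L → ℕ) (δ : ℕ → ℝ)
    (hδ : ∀ ℓ, δ ℓ = 2 ^ (ℓ + 1) - 2)
    (hsymm : ∀ u w, lca u w = lca w u)
    (hself : ∀ u, lca u u = 0)
    (hultra : ∀ u w z, lca u z ≤ max (lca u w) (lca w z))
    (k : ℕ) (v : Fin (k + 1) → L) (nxt : Fin (k + 1) → Fin (k + 1))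
    (h1 : ∀ i : Fin (k + 1), i.val < k → i < nxt i)
    (h2 : ∀ i j : Fin (k + 1), i.val < k → i < j →
      δ (lca (v i) (v (nxt i))) ≤ δ (lca (v i) (v j)))
    (h3 : ∀ i j : Fin (k + 1), i.val < k → i < j → j < nxt i →
      δ (lca (v i) (v (nxt i))) < δ (lca (v i) (v j)))
    (u₀ : L) (ℓ : ℕ) (S : Set (Fin (k + 1)))
    (hS : S = {i | lca (v i) u₀ ≤ ℓ}) (hne : S.Nonempty) :
    ((SimpleGraph.fromEdgeSet
      {e : Sym2 (Fin (k + 1)) | ∃ i : Fin (k + 1), i.val < k ∧ e = s(i, nxt i)}).induce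
        S).Connected :=
  stmt16_general lca δ hδ hsymm hultra k v nxt h1 h2 u₀ ℓ S hS hne
end
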